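/- arXiv:1812.11543 — 3 statements merged into one kernel-verified Lean document; each statement's English description precedes it below -/
import Mathlib

section
/- Let σ: ℝ → ℝ be a non-decreasing sigmoidal function satisfying conditions (Σ1), (Σ2) and (Σ3) with exponent α > 0, and let s ≥ 1 be an integer. Then Ψ_σ(x) = O(‖x‖_2^{−α}) as ‖x‖_2 → +∞, where ‖·‖_2 denotes the Euclidean norm of ℝ^s. -/
open MeasureTheory Filter Asymptotics
open scoped ENNReal

/-- The density function associated to a sigmoidal function `σ`:
`φ_σ(x) := (1/2)[σ(x+1) − σ(x−1)]`. -/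
noncomputable def phiSig (σ : ℝ → ℝ) (x : ℝ) : ℝ := (σ (x + 1) - σ (x - 1)) / 2

/-- The multivariate density function `Ψ_σ(x) := ∏ i, φ_σ (x i)`. -/
noncomputable def PsiSig (s : ℕ) (σ : ℝ → ℝ) (x : Fin s → ℝ) : ℝ :=
  ∏ i, phiSig σ (x i)

theorem stmt2 (σ : ℝ → ℝ) (s : ℕ) (hs : 1 ≤ s) (α : ℝ) (hα : 0 < α)
    (hmeas : Measurable σ) (hmono : Monotone σ)
    (hbot : Tendsto σ atBot (nhds 0)) (htop : Tendsto σ atTop (nhds 1))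
    (hSigma1 : ∀ x : ℝ, σ (-x) - 1/2 = -(σ x - 1/2))
    (hSigma2a : ∀ x y : ℝ, x ≤ y → y < 0 → phiSig σ x ≤ phiSig σ y)
    (hSigma2b : ∀ x y : ℝ, 0 ≤ x → x ≤ y → phiSig σ y ≤ phiSig σ x)
    (hSigma3 : σ =O[atBot] fun x => |x| ^ (-α)) :
    (PsiSig s σ) =O[comap (fun x : Fin s → ℝ => Real.sqrt (∑ i, (x i) ^ 2)) atTop]
      fun x => (Real.sqrt (∑ i, (x i) ^ 2)) ^ (-α) := by
  have hσ0 : ∀ t, 0 ≤ σ t := fun t =>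
    le_of_tendsto hbot (eventually_atBot.2 ⟨t, fun y hy => hmono hy⟩)
  have hσ1 : ∀ t, σ t ≤ 1 := fun t =>
    ge_of_tendsto htop (eventually_atTop.2 ⟨t, fun y hy => hmono hy⟩)
  have hsym : ∀ t : ℝ, σ (-t) = 1 - σ t := fun t => by have := hSigma1 t; linarith
  have hφ0 : ∀ t, 0 ≤ phiSig σ t := fun t => by
    have := hmono (show t - 1 ≤ t + 1 by linarith)
    simp only [phiSig]; linarith
  have hφ1 : ∀ t, phiSig σ t ≤ 1 := fun t => by
    have h1 := hσ1 (t + 1); have h0 := hσ0 (t - 1)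
    simp only [phiSig]; linarith
  have hφeven : ∀ t, phiSig σ (-t) = phiSig σ t := fun t => by
    simp only [phiSig]
    rw [show -t + 1 = -(t - 1) by ring, show -t - 1 = -(t + 1) by ring, hsym, hsym]
    ring
  obtain ⟨c, hc⟩ := hSigma3.bound
  obtain ⟨R₀, hR₀⟩ := eventually_atBot.1 hc
  set R₁ : ℝ := min R₀ (-1) with hR₁def
  have hR₁neg : R₁ ≤ -1 := min_le_right _ _
  have hσbd : ∀ u : ℝ, u ≤ R₁ → σ u ≤ c * |u| ^ (-α) := by
    intro u hu
    have h := hR₀ u (le_trans hu (min_le_left _ _))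
    rwa [Real.norm_of_nonneg (hσ0 u),
      Real.norm_of_nonneg (Real.rpow_nonneg (abs_nonneg _) _)] at h
  have hc0 : 0 ≤ c := by
    have h := hσbd R₁ le_rfl
    have hpos : 0 < |R₁| ^ (-α) :=
      Real.rpow_pos_of_pos (abs_pos.2 (by linarith)) _
    nlinarith [hσ0 R₁]
  set R : ℝ := max 2 (1 - R₁) with hRdef
  have hR2 : (2:ℝ) ≤ R := le_max_left _ _
  set K : ℝ := c * 2 ^ α with hKdef
  have hK0 : 0 ≤ K := mul_nonneg hc0 (Real.rpow_nonneg (by norm_num) _)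
  -- decay of phiSig on [R, ∞)
  have hφpos : ∀ t : ℝ, R ≤ t → phiSig σ t ≤ K * t ^ (-α) := by
    intro t ht
    have ht2 : (2:ℝ) ≤ t := le_trans hR2 ht
    have h1 : phiSig σ t ≤ σ (1 - t) / 2 := by
      have hσsym : σ (1 - t) = 1 - σ (t - 1) := by
        rw [show (1 - t) = -(t - 1) by ring, hsym]
      have := hσ1 (t + 1)
      simp only [phiSig]; linarith
    have h2 : σ (1 - t) ≤ c * |1 - t| ^ (-α) := by
      apply hσbd
      have : 1 - R₁ ≤ t := le_trans (le_max_right _ _) ht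
      linarith
    have habs : |1 - t| = t - 1 := by rw [abs_of_nonpos (by linarith)]; ring
    have h3 : (t - 1) ^ (-α) ≤ (t / 2) ^ (-α) :=
      Real.rpow_le_rpow_of_nonpos (by linarith) (by linarith) (by linarith)
    have h4 : (t / 2) ^ (-α) = t ^ (-α) * 2 ^ α := by
      rw [Real.div_rpow (by linarith) (by norm_num),
        Real.rpow_neg (by norm_num : (0:ℝ) ≤ 2), div_eq_mul_inv, inv_inv]
    have htneg : 0 ≤ t ^ (-α) := Real.rpow_nonneg (by linarith) _
    calc phiSig σ t ≤ σ (1 - t) / 2 := h1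
      _ ≤ c * |1 - t| ^ (-α) / 2 := by linarith
      _ = c * (t - 1) ^ (-α) / 2 := by rw [habs]
      _ ≤ c * ((t / 2) ^ (-α)) / 2 := by nlinarith
      _ = K * t ^ (-α) / 2 := by rw [h4, hKdef]; ring
      _ ≤ K * t ^ (-α) := by nlinarith [mul_nonneg hK0 htneg]
  have hkey : ∀ t : ℝ, R ≤ |t| → phiSig σ t ≤ K * |t| ^ (-α) := by
    intro t ht
    rcases le_or_gt 0 t with h | h
    · rw [abs_of_nonneg h] at ht ⊢; exact hφpos t ht
    · rw [abs_of_neg h] at ht ⊢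
      rw [← hφeven t]
      exact hφpos (-t) ht
  -- main argument
  have hs0 : (0:ℝ) < Real.sqrt s := Real.sqrt_pos.2 (by exact_mod_cast hs)
  have hsα : 0 ≤ Real.sqrt s ^ α := Real.rpow_nonneg hs0.le _
  rw [isBigO_iff]
  refine ⟨K * Real.sqrt s ^ α, ?_⟩
  rw [eventually_comap]
  filter_upwards [eventually_ge_atTop (max 1 (R * Real.sqrt s))] with M hM x hx
  have hM1 : (1:ℝ) ≤ M := le_trans (le_max_left _ _) hM
  have hMR : R * Real.sqrt s ≤ M := le_trans (le_max_right _ _) hM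
  obtain ⟨i₀, -, hi₀⟩ := Finset.exists_max_image Finset.univ (fun i => |x i|)
    ⟨⟨0, hs⟩, Finset.mem_univ _⟩
  have hsum : ∑ i, (x i) ^ 2 ≤ (s : ℝ) * (x i₀) ^ 2 := by
    calc ∑ i, (x i) ^ 2 ≤ ∑ _i : Fin s, (x i₀) ^ 2 := by
          apply Finset.sum_le_sum
          intro i _
          calc (x i) ^ 2 = |x i| ^ 2 := (sq_abs _).symm
            _ ≤ |x i₀| ^ 2 := pow_le_pow_left₀ (abs_nonneg _) (hi₀ i (Finset.mem_univ _)) 2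
            _ = (x i₀) ^ 2 := sq_abs _
      _ = (s : ℝ) * (x i₀) ^ 2 := by
          rw [Finset.sum_const, Finset.card_univ, Fintype.card_fin, nsmul_eq_mul]
  have hMle : M ≤ Real.sqrt s * |x i₀| := by
    rw [← hx]
    calc Real.sqrt (∑ i, (x i) ^ 2) ≤ Real.sqrt ((s : ℝ) * (x i₀) ^ 2) :=
          Real.sqrt_le_sqrt hsum
      _ = Real.sqrt s * |x i₀| := by
          rw [Real.sqrt_mul (by positivity), Real.sqrt_sq_eq_abs]
  have hxi₀R : R ≤ |x i₀| := by
    rw [← mul_le_mul_iff_right₀ hs0]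
    calc Real.sqrt s * R = R * Real.sqrt s := mul_comm _ _
      _ ≤ M := hMR
      _ ≤ Real.sqrt s * |x i₀| := hMle
  have hdivle : M / Real.sqrt s ≤ |x i₀| := by
    rw [div_le_iff₀ hs0]
    calc M ≤ Real.sqrt s * |x i₀| := hMle
      _ = |x i₀| * Real.sqrt s := mul_comm _ _
  have hprod : PsiSig s σ x ≤ phiSig σ (x i₀) := by
    rw [PsiSig, ← Finset.mul_prod_erase Finset.univ _ (Finset.mem_univ i₀)]
    exact mul_le_of_le_one_right (hφ0 _)
      (Finset.prod_le_one (fun i _ => hφ0 _) (fun i _ => hφ1 _))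
  have hrw : |x i₀| ^ (-α) ≤ (M / Real.sqrt s) ^ (-α) :=
    Real.rpow_le_rpow_of_nonpos (by positivity) hdivle (by linarith)
  have hMs : (M / Real.sqrt s) ^ (-α) = M ^ (-α) * Real.sqrt s ^ α := by
    rw [Real.div_rpow (by linarith) hs0.le, Real.rpow_neg hs0.le, div_eq_mul_inv, inv_inv]
  have hMα : 0 ≤ M ^ (-α) := Real.rpow_nonneg (by linarith) _
  have hΨ0 : (0:ℝ) ≤ PsiSig s σ x := Finset.prod_nonneg fun i _ => hφ0 _
  rw [hx, Real.norm_of_nonneg hΨ0, Real.norm_of_nonneg hMα]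
  calc PsiSig s σ x ≤ phiSig σ (x i₀) := hprod
    _ ≤ K * |x i₀| ^ (-α) := hkey _ hxi₀R
    _ ≤ K * (M / Real.sqrt s) ^ (-α) := by nlinarith
    _ = K * Real.sqrt s ^ α * M ^ (-α) := by rw [hMs]; ring
end

section
/- Let σ: ℝ → ℝ be a non-decreasing sigmoidal function satisfying conditions (Σ1), (Σ2) and (Σ3), and let s ≥ 1 be an integer. Then the multivariate density function Ψ_σ belongs to L^1(ℝ^s). -/
open MeasureTheory Filter Asymptotics
open scoped ENNReal

theorem phiSig_integrable (σ : ℝ → ℝ) (hmono : Monotone σ)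
    (hbot : Filter.Tendsto σ atBot (nhds 0)) (htop : Filter.Tendsto σ atTop (nhds 1)) :
    Integrable (phiSig σ) := by
  -- σ takes values in [0, 1]
  have hσ0 : ∀ x, 0 ≤ σ x := fun x =>
    le_of_tendsto hbot ((eventually_le_atBot x).mono fun y hy => hmono hy)
  have hσ1 : ∀ x, σ x ≤ 1 := fun x =>
    ge_of_tendsto htop ((eventually_ge_atTop x).mono fun y hy => hmono hy)
  have hφ0 : ∀ x, 0 ≤ phiSig σ x := fun x => by
    have : σ (x - 1) ≤ σ (x + 1) := hmono (by linarith)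
    simp only [phiSig]; linarith
  -- interval integrability
  have h1 : ∀ a b : ℝ, IntervalIntegrable (fun x => σ (x + 1)) volume a b :=
    fun a b => (hmono.comp (fun u v huv => by linarith : Monotone _)).intervalIntegrable
  have h2 : ∀ a b : ℝ, IntervalIntegrable (fun x => σ (x - 1)) volume a b :=
    fun a b => (hmono.comp (fun u v huv => by linarith : Monotone _)).intervalIntegrable
  have hφint : ∀ a b : ℝ, IntervalIntegrable (phiSig σ) volume a b := fun a b => by
    have := ((h1 a b).sub (h2 a b)).div_const 2
    exact this.congr (fun x _ => rfl)
  have hσint : ∀ a b : ℝ, IntervalIntegrable σ volume a b :=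
    fun a b => hmono.intervalIntegrable
  -- bound on ∫ σ over intervals of length 2
  have hub : ∀ c : ℝ, (∫ x in (c - 1)..(c + 1), σ x) ≤ 2 := fun c => by
    have : (∫ x in (c - 1)..(c + 1), σ x) ≤ ∫ _x in (c - 1)..(c + 1), (1 : ℝ) := by
      apply intervalIntegral.integral_mono_on (by linarith) (hσint _ _)
        intervalIntegrable_const
      exact fun x _ => hσ1 x
    simpa using this.trans (by simp; linarith)
  have hlb : ∀ c : ℝ, (0 : ℝ) ≤ ∫ x in (c - 1)..(c + 1), σ x := fun c =>
    intervalIntegral.integral_nonneg (by linarith) fun x _ => hσ0 x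
  -- main bound on ∫ |φ| over [-n, n]
  apply integrable_of_intervalIntegral_norm_bounded (a := fun n : ℕ => -(n : ℝ))
    (b := fun n : ℕ => (n : ℝ)) (l := atTop) 1
  · intro n
    exact (hφint (-(n : ℝ)) n).1
  · exact tendsto_neg_atBot_iff.mpr tendsto_natCast_atTop_atTop
  · exact tendsto_natCast_atTop_atTop
  · filter_upwards with n
    have hn : -(n : ℝ) ≤ (n : ℝ) := by simp
    have e1 : (∫ x in (-(n:ℝ))..(n:ℝ), ‖phiSig σ x‖) = ∫ x in (-(n:ℝ))..(n:ℝ), phiSig σ x := by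
      apply intervalIntegral.integral_congr
      intro x _
      exact Real.norm_of_nonneg (hφ0 x)
    have e2 : (∫ x in (-(n:ℝ))..(n:ℝ), phiSig σ x) =
        ((∫ x in (-(n:ℝ) + 1)..((n:ℝ) + 1), σ x) - ∫ x in (-(n:ℝ) - 1)..((n:ℝ) - 1), σ x) / 2 := by
      rw [show phiSig σ = fun x => (σ (x + 1) - σ (x - 1)) / 2 from rfl]
      rw [intervalIntegral.integral_div, intervalIntegral.integral_sub (h1 _ _) (h2 _ _),
        intervalIntegral.integral_comp_add_right, intervalIntegral.integral_comp_sub_right]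
    have e3 : (∫ x in (-(n:ℝ) + 1)..((n:ℝ) + 1), σ x) - (∫ x in (-(n:ℝ) - 1)..((n:ℝ) - 1), σ x)
        = (∫ x in ((n:ℝ) - 1)..((n:ℝ) + 1), σ x) - ∫ x in (-(n:ℝ) - 1)..(-(n:ℝ) + 1), σ x := by
      have c1 : (∫ x in (-(n:ℝ) - 1)..((n:ℝ) - 1), σ x) + (∫ x in ((n:ℝ) - 1)..((n:ℝ) + 1), σ x)
          = ∫ x in (-(n:ℝ) - 1)..((n:ℝ) + 1), σ x :=
        intervalIntegral.integral_add_adjacent_intervals (hσint _ _) (hσint _ _)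
      have c2 : (∫ x in (-(n:ℝ) - 1)..(-(n:ℝ) + 1), σ x) + (∫ x in (-(n:ℝ) + 1)..((n:ℝ) + 1), σ x)
          = ∫ x in (-(n:ℝ) - 1)..((n:ℝ) + 1), σ x :=
        intervalIntegral.integral_add_adjacent_intervals (hσint _ _) (hσint _ _)
      linarith
    rw [e1, e2, e3]
    have := hub (n : ℝ)
    have := hlb (-(n : ℝ))
    linarith [hub (n : ℝ), hlb (-(n : ℝ))]

theorem stmt3 (σ : ℝ → ℝ) (s : ℕ) (hs : 1 ≤ s)
    (hmeas : Measurable σ) (hmono : Monotone σ)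
    (hbot : Tendsto σ atBot (nhds 0)) (htop : Tendsto σ atTop (nhds 1))
    (hSigma1 : ∀ x : ℝ, σ (-x) - 1/2 = -(σ x - 1/2))
    (hSigma2a : ∀ x y : ℝ, x ≤ y → y < 0 → phiSig σ x ≤ phiSig σ y)
    (hSigma2b : ∀ x y : ℝ, 0 ≤ x → x ≤ y → phiSig σ y ≤ phiSig σ x)
    (hSigma3 : ∃ α : ℝ, 0 < α ∧ σ =O[atBot] fun x => |x| ^ (-α))
 :
    Integrable (PsiSig s σ) := by
  have h := phiSig_integrable σ hmono hbot htop
  have : Integrable (fun x : Fin s → ℝ => ∏ i, phiSig σ (x i)) :=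
    Integrable.fintype_prod (f := fun _ : Fin s => phiSig σ) fun _ => h
  exact this
end

section
/- Let σ: ℝ → ℝ be a non-decreasing sigmoidal function satisfying conditions (Σ1), (Σ2) and (Σ3), let φ be a convex φ-function, and let f : R → [0,+∞) be continuous on the box R. Then for every λ > 0, lim_{n→+∞} I^φ[λ(K_n(f, ·) − f(·))] = 0. -/
open MeasureTheory Filter Asymptotics
open scoped ENNReal

/-- The index set `J_n := {k ∈ ℤ^s : ⌈n a_i⌉ ≤ k_i ≤ ⌊n b_i⌋ − 1}`. -/
def Jset (s : ℕ) (a b : Fin s → ℝ) (n : ℕ) : Set (Fin s → ℤ) :=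
  {k | ∀ i, ⌈(n : ℝ) * a i⌉ ≤ k i ∧ k i ≤ ⌊(n : ℝ) * b i⌋ - 1}

/-- The max (sup) of `A k` over the (finite) index set `J_n`. -/
noncomputable def maxProd (s : ℕ) (a b : Fin s → ℝ) (n : ℕ)
    (A : (Fin s → ℤ) → ℝ) : ℝ :=
  sSup (A '' Jset s a b n)

/-- The Kantorovich mean `n^s ∫_{R^n_k} f(u) du` over the cell
`R^n_k = ∏ i [k_i/n, (k_i+1)/n]`. -/
noncomputable def kantMean (s : ℕ) (n : ℕ) (f : (Fin s → ℝ) → ℝ)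
    (k : Fin s → ℤ) : ℝ :=
  (n : ℝ) ^ s *
    ∫ u in Set.Icc (fun i => (k i : ℝ) / n) (fun i => ((k i : ℝ) + 1) / n), f u

/-- The multivariate max-product Kantorovich neural network operator `K_n(f, x)`. -/
noncomputable def Kop (s : ℕ) (σ : ℝ → ℝ) (a b : Fin s → ℝ) (n : ℕ)
    (f : (Fin s → ℝ) → ℝ) (x : Fin s → ℝ) : ℝ :=
  maxProd s a b n (fun k => kantMean s n f k * PsiSig s σ (fun i => n * x i - k i)) /
    maxProd s a b n (fun k => PsiSig s σ (fun i => n * x i - k i))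

/-- The modular functional `I^φ[f] := ∫_R φ(|f(x)|) dx` on the box `R = Icc a b`. -/
noncomputable def modular (s : ℕ) (a b : Fin s → ℝ) (φ : ℝ → ℝ)
    (f : (Fin s → ℝ) → ℝ) : ℝ≥0∞ :=
  ∫⁻ x in Set.Icc a b, ENNReal.ofReal (φ |f x|)



section SigLemmas
variable {σ : ℝ → ℝ}

lemma phiSig_nonneg (hmono : Monotone σ) (x : ℝ) : 0 ≤ phiSig σ x := by
  have := hmono (show x - 1 ≤ x + 1 by linarith)
  unfold phiSig; linarith

lemma sigma_zero (hSigma1 : ∀ x : ℝ, σ (-x) - 1/2 = -(σ x - 1/2)) : σ 0 = 1/2 := by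
  have := hSigma1 0
  simp at this; linarith

lemma phiSig_even (hSigma1 : ∀ x : ℝ, σ (-x) - 1/2 = -(σ x - 1/2)) (x : ℝ) :
    phiSig σ (-x) = phiSig σ x := by
  have h1 := hSigma1 (x - 1)
  have h2 := hSigma1 (x + 1)
  have e1 : -x + 1 = -(x - 1) := by ring
  have e2 : -x - 1 = -(x + 1) := by ring
  unfold phiSig
  rw [e1, e2]; linarith

lemma phiSig_abs (hSigma1 : ∀ x : ℝ, σ (-x) - 1/2 = -(σ x - 1/2)) (x : ℝ) :
    phiSig σ x = phiSig σ |x| := by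
  rcases abs_cases x with ⟨h, _⟩ | ⟨h, _⟩
  · rw [h]
  · rw [h, phiSig_even hSigma1]

lemma phiSig_le_zero' (hSigma1 : ∀ x : ℝ, σ (-x) - 1/2 = -(σ x - 1/2))
    (hSigma2b : ∀ x y : ℝ, 0 ≤ x → x ≤ y → phiSig σ y ≤ phiSig σ x) (x : ℝ) :
    phiSig σ x ≤ phiSig σ 0 := by
  rw [phiSig_abs hSigma1]
  exact hSigma2b 0 |x| le_rfl (abs_nonneg x)

lemma phiSig_tendsto (hbot : Tendsto σ atBot (nhds 0)) (htop : Tendsto σ atTop (nhds 1)) :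
    Tendsto (phiSig σ) atTop (nhds 0) := by
  have h1 : Tendsto (fun x : ℝ => σ (x + 1)) atTop (nhds 1) :=
    htop.comp (tendsto_atTop_add_const_right _ 1 tendsto_id)
  have h2 : Tendsto (fun x : ℝ => σ (x - 1)) atTop (nhds 1) :=
    htop.comp (tendsto_atTop_add_const_right _ (-1) tendsto_id)
  have : Tendsto (fun x : ℝ => (σ (x + 1) - σ (x - 1)) / 2) atTop (nhds ((1 - 1) / 2)) :=
    (h1.sub h2).div_const 2
  simp at this
  exact this

lemma phiSig_one_pos (hmono : Monotone σ) (htop : Tendsto σ atTop (nhds 1))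
    (hSigma1 : ∀ x : ℝ, σ (-x) - 1/2 = -(σ x - 1/2))
    (hSigma2b : ∀ x y : ℝ, 0 ≤ x → x ≤ y → phiSig σ y ≤ phiSig σ x) :
    0 < phiSig σ 1 := by
  rcases lt_or_ge 0 (phiSig σ 1) with h | h
  · exact h
  exfalso
  have hzero : ∀ x : ℝ, 1 ≤ x → phiSig σ x = 0 := fun x hx =>
    le_antisymm (le_trans (hSigma2b 1 x (by norm_num) hx) h) (phiSig_nonneg hmono x)
  have hper : ∀ y : ℝ, 0 ≤ y → σ (y + 2) = σ y := by
    intro y hy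
    have := hzero (y + 1) (by linarith)
    unfold phiSig at this
    have h1 : y + 1 + 1 = y + 2 := by ring
    have h2 : y + 1 - 1 = y := by ring
    rw [h1, h2] at this
    have : σ (y + 2) - σ y = 0 := by linarith
    linarith
  have hval : ∀ m : ℕ, σ (2 * m) = 1/2 := by
    intro m
    induction m with
    | zero => simpa using sigma_zero hSigma1
    | succ m ih =>
      have : (2 : ℝ) * (m + 1) = 2 * m + 2 := by ring
      rw [Nat.cast_succ, this, hper (2 * m) (by positivity), ih]
  have htend : Tendsto (fun m : ℕ => σ (2 * m)) atTop (nhds 1) := by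
    apply htop.comp
    apply Tendsto.const_mul_atTop (by norm_num : (0:ℝ) < 2) tendsto_natCast_atTop_atTop
  have : Tendsto (fun _ : ℕ => (1:ℝ)/2) atTop (nhds 1) := by
    convert htend using 2 with m
    rw [hval m]
  have := tendsto_nhds_unique this tendsto_const_nhds
  norm_num at this

lemma sigma_measurable_phi (hmeas : Measurable σ) : Measurable (phiSig σ) := by
  unfold phiSig
  exact ((hmeas.comp (measurable_add_const 1)).sub
    (hmeas.comp (measurable_sub_const 1))).div_const 2

end SigLemmas


section PsiLemmas
variable {σ : ℝ → ℝ} {s : ℕ}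

lemma PsiSig_nonneg (hσ : ∀ t, 0 ≤ phiSig σ t) (x : Fin s → ℝ) : 0 ≤ PsiSig s σ x :=
  Finset.prod_nonneg fun i _ => hσ (x i)

lemma PsiSig_le (hσ : ∀ t, 0 ≤ phiSig σ t) (hle : ∀ t, phiSig σ t ≤ phiSig σ 0)
    (x : Fin s → ℝ) : PsiSig s σ x ≤ (phiSig σ 0) ^ s := by
  have : PsiSig s σ x ≤ ∏ _i : Fin s, phiSig σ 0 :=
    Finset.prod_le_prod (fun i _ => hσ (x i)) (fun i _ => hle (x i))
  simpa using this

lemma PsiSig_ge (hσ : ∀ t, 0 ≤ phiSig σ t)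
    (h1 : ∀ t, |t| ≤ 1 → phiSig σ 1 ≤ phiSig σ t)
    (x : Fin s → ℝ) (hx : ∀ i, |x i| ≤ 1) : (phiSig σ 1) ^ s ≤ PsiSig s σ x := by
  have : (∏ _i : Fin s, phiSig σ 1) ≤ PsiSig s σ x :=
    Finset.prod_le_prod (fun i _ => hσ 1) (fun i _ => h1 (x i) (hx i))
  simpa using this

lemma PsiSig_factor_le (hσ : ∀ t, 0 ≤ phiSig σ t) (hle : ∀ t, phiSig σ t ≤ phiSig σ 0)
    (x : Fin s → ℝ) (i0 : Fin s) (T : ℝ)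
    (hT : phiSig σ (x i0) ≤ T) :
    PsiSig s σ x ≤ T * (phiSig σ 0) ^ (s - 1) := by
  have hstep : PsiSig s σ x ≤ ∏ i : Fin s, (if i = i0 then T else phiSig σ 0) := by
    apply Finset.prod_le_prod (fun i _ => hσ (x i))
    intro i _
    by_cases h : i = i0
    · subst h; simpa using hT
    · simp [h, hle (x i)]
  refine hstep.trans_eq ?_
  rw [Finset.prod_eq_mul_prod_sdiff_singleton_of_mem (Finset.mem_univ i0)]
  simp only [if_pos rfl]
  congr 1
  rw [Finset.prod_ite_of_false]
  · rw [Finset.prod_const]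
    congr 1
    simp [Finset.card_sdiff_of_subset, Fintype.card_fin]
  · intro i hi
    simp only [Finset.mem_sdiff, Finset.mem_singleton] at hi
    exact hi.2

end PsiLemmas

/-- The finset version of `Jset`. -/
noncomputable def Jfin (s : ℕ) (a b : Fin s → ℝ) (n : ℕ) : Finset (Fin s → ℤ) :=
  Fintype.piFinset fun i => Finset.Icc ⌈(n : ℝ) * a i⌉ (⌊(n : ℝ) * b i⌋ - 1)

lemma mem_Jfin {s : ℕ} {a b : Fin s → ℝ} {n : ℕ} {k : Fin s → ℤ} :
    k ∈ Jfin s a b n ↔ ∀ i, ⌈(n : ℝ) * a i⌉ ≤ k i ∧ k i ≤ ⌊(n : ℝ) * b i⌋ - 1 := by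
  simp [Jfin, Fintype.mem_piFinset, Finset.mem_Icc]

lemma coe_Jfin (s : ℕ) (a b : Fin s → ℝ) (n : ℕ) :
    (↑(Jfin s a b n) : Set (Fin s → ℤ)) = Jset s a b n := by
  ext k; simp [mem_Jfin, Jset]

lemma maxProd_eq_sup' {s : ℕ} {a b : Fin s → ℝ} {n : ℕ} (h : (Jfin s a b n).Nonempty)
    (A : (Fin s → ℤ) → ℝ) : maxProd s a b n A = (Jfin s a b n).sup' h A := by
  rw [maxProd, ← coe_Jfin, Finset.sup'_eq_csSup_image]

lemma maxProd_of_empty {s : ℕ} {a b : Fin s → ℝ} {n : ℕ} (h : Jfin s a b n = ∅)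
    (A : (Fin s → ℤ) → ℝ) : maxProd s a b n A = 0 := by
  rw [maxProd, ← coe_Jfin, h]
  simp [Real.sSup_empty]
section CellLemmas
variable {s : ℕ} {a b : Fin s → ℝ} {n : ℕ} {k : Fin s → ℤ}

/-- For `k ∈ J_n` and `n ≥ 1`, the cell is contained in the box. -/
lemma cell_subset (hn : (0:ℝ) < n) (hk : k ∈ Jfin s a b n) :
    Set.Icc (fun i => (k i : ℝ) / n) (fun i => ((k i : ℝ) + 1) / n) ⊆ Set.Icc a b := by
  apply Set.Icc_subset_Icc
  · intro i
    have h1 := (mem_Jfin.1 hk i).1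
    have h2 : (n:ℝ) * a i ≤ ⌈(n:ℝ) * a i⌉ := Int.le_ceil _
    have h3 : ((⌈(n:ℝ) * a i⌉ : ℤ) : ℝ) ≤ (k i : ℝ) := by exact_mod_cast h1
    rw [le_div_iff₀ hn, mul_comm]
    linarith
  · intro i
    have h1 := (mem_Jfin.1 hk i).2
    have h2 : ((k i : ℤ) : ℝ) + 1 ≤ (⌊(n:ℝ) * b i⌋ : ℝ) := by
      have : (k i : ℤ) + 1 ≤ ⌊(n:ℝ) * b i⌋ := by omega
      exact_mod_cast this
    have h3 : ((⌊(n:ℝ) * b i⌋ : ℤ) : ℝ) ≤ (n:ℝ) * b i := Int.floor_le _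
    rw [div_le_iff₀ hn, mul_comm]
    linarith

lemma cell_volume (hn : (0:ℝ) < n) :
    (volume (Set.Icc (fun i => (k i : ℝ) / n) (fun i => ((k i : ℝ) + 1) / n))).toReal
      = ((1:ℝ) / n) ^ s := by
  rw [Real.volume_Icc_pi_toReal]
  · rw [Finset.prod_congr rfl (g := fun _ => (1:ℝ)/n), Finset.prod_const]
    · simp
    · intro i _
      field_simp
      ring
  · intro i
    rw [div_le_div_iff_of_pos_right hn]
    linarith

lemma kantMean_sub_le {f : (Fin s → ℝ) → ℝ} (hn : (0:ℝ) < n)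
    (hfc : ContinuousOn f (Set.Icc a b)) (hk : k ∈ Jfin s a b n)
    {c ε : ℝ} (hε : 0 ≤ ε)
    (hb : ∀ u ∈ Set.Icc (fun i => (k i : ℝ) / n) (fun i => ((k i : ℝ) + 1) / n),
      |f u - c| ≤ ε) :
    |kantMean s n f k - c| ≤ ε := by
  set cell := Set.Icc (fun i => (k i : ℝ) / n) (fun i => ((k i : ℝ) + 1) / n) with hcell
  have hsub : cell ⊆ Set.Icc a b := cell_subset hn hk
  have hint : IntegrableOn f cell := (hfc.mono hsub).integrableOn_compact isCompact_Icc
  have hcint : IntegrableOn (fun _ => c) cell :=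
    integrableOn_const isCompact_Icc.measure_lt_top.ne
  have hvol : (volume cell).toReal = ((1:ℝ)/n) ^ s := cell_volume hn
  have hns : (n:ℝ) ^ s * ((1:ℝ)/n) ^ s = 1 := by
    rw [← mul_pow]
    field_simp
    exact one_pow s
  have hconst : ∫ _u in cell, c = ((1:ℝ)/n) ^ s * c := by
    rw [setIntegral_const, measureReal_def, hvol, smul_eq_mul]
  have hdiff : kantMean s n f k - c = (n:ℝ) ^ s * ∫ u in cell, (f u - c) := by
    rw [integral_sub hint hcint, hconst]
    unfold kantMean
    rw [← hcell, mul_sub]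
    have : (n:ℝ) ^ s * ((1:ℝ)/n) ^ s * c = c := by rw [hns, one_mul]
    linear_combination this
  rw [hdiff]
  have hnorm : ‖∫ u in cell, (f u - c)‖ ≤ ε * (volume cell).toReal := by
    apply norm_setIntegral_le_of_norm_le_const isCompact_Icc.measure_lt_top
    intro u hu
    simpa using hb u hu
  rw [abs_mul, abs_pow]
  have : |(n:ℝ)| = (n:ℝ) := abs_of_pos hn
  rw [this]
  calc (n:ℝ) ^ s * |∫ u in cell, (f u - c)| ≤ (n:ℝ) ^ s * (ε * ((1:ℝ)/n) ^ s) := by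
        apply mul_le_mul_of_nonneg_left _ (by positivity)
        rw [← hvol]
        simpa using hnorm
    _ = ε := by linear_combination ε * hns

lemma kantMean_nonneg {f : (Fin s → ℝ) → ℝ} (hn : (0:ℝ) < n)
    (hk : k ∈ Jfin s a b n) (hf0 : ∀ x ∈ Set.Icc a b, 0 ≤ f x) :
    0 ≤ kantMean s n f k := by
  unfold kantMean
  apply mul_nonneg (by positivity)
  apply setIntegral_nonneg measurableSet_Icc
  intro u hu
  exact hf0 u (cell_subset hn hk hu)

end CellLemmas
section KopLemmas
variable {σ : ℝ → ℝ} {s : ℕ} {a b : Fin s → ℝ} {n : ℕ}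

lemma measurable_Psi_comp (hmeas : Measurable σ) (k : Fin s → ℤ) :
    Measurable (fun x : Fin s → ℝ => PsiSig s σ (fun i => n * x i - k i)) := by
  unfold PsiSig
  apply Finset.measurable_prod
  intro i _
  exact (sigma_measurable_phi hmeas).comp
    (((measurable_pi_apply i).const_mul _).sub_const _)

lemma measurable_Kop (hmeas : Measurable σ) (f : (Fin s → ℝ) → ℝ) :
    Measurable (Kop s σ a b n f) := by
  unfold Kop
  rcases (Jfin s a b n).eq_empty_or_nonempty with h | h
  · have e1 : ∀ A : (Fin s → ℤ) → ℝ, maxProd s a b n A = 0 := maxProd_of_empty h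
    simp only [e1]
    simpa using measurable_const
  · apply Measurable.div
    · have : (fun x : Fin s → ℝ => maxProd s a b n
          (fun k => kantMean s n f k * PsiSig s σ (fun i => n * x i - k i)))
          = fun x => (Jfin s a b n).sup' h
            (fun k => kantMean s n f k * PsiSig s σ (fun i => n * x i - k i)) := by
        funext x; exact maxProd_eq_sup' h _
      rw [this]
      have : (fun x : Fin s → ℝ => (Jfin s a b n).sup' h
            (fun k => kantMean s n f k * PsiSig s σ (fun i => n * x i - k i)))
          = (Jfin s a b n).sup' h
            (fun k x => kantMean s n f k * PsiSig s σ (fun i => n * x i - k i)) := by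
        funext x
        rw [Finset.sup'_apply]
      rw [this]
      exact Finset.measurable_sup' h fun k _ => (measurable_Psi_comp hmeas k).const_mul _
    · have : (fun x : Fin s → ℝ => maxProd s a b n
          (fun k => PsiSig s σ (fun i => n * x i - k i)))
          = (Jfin s a b n).sup' h (fun k x => PsiSig s σ (fun i => n * x i - k i)) := by
        funext x
        rw [maxProd_eq_sup' h _, Finset.sup'_apply]
      rw [this]
      exact Finset.measurable_sup' h fun k _ => measurable_Psi_comp hmeas k

lemma Jfin_nonempty_pos (hs : 1 ≤ s) (h : (Jfin s a b n).Nonempty) : (0:ℝ) < n := by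
  rcases h with ⟨k, hk⟩
  rcases Nat.eq_zero_or_pos n with rfl | hn
  · exfalso
    have := mem_Jfin.1 hk ⟨0, hs⟩
    simp at this
    omega
  · exact_mod_cast hn

lemma Kop_nonneg_le (hs : 1 ≤ s) (hσ : ∀ t, 0 ≤ phiSig σ t)
    {f : (Fin s → ℝ) → ℝ} (hf0 : ∀ y ∈ Set.Icc a b, 0 ≤ f y)
    (hfc : ContinuousOn f (Set.Icc a b))
    {M : ℝ} (hM0 : 0 ≤ M) (hM : ∀ y ∈ Set.Icc a b, |f y| ≤ M) (x : Fin s → ℝ) :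
    0 ≤ Kop s σ a b n f x ∧ Kop s σ a b n f x ≤ M := by
  unfold Kop
  rcases (Jfin s a b n).eq_empty_or_nonempty with h | h
  · rw [maxProd_of_empty h, maxProd_of_empty h]
    simp [hM0]
  · have hn : (0:ℝ) < n := Jfin_nonempty_pos hs h
    set Ψ : (Fin s → ℤ) → ℝ := fun k => PsiSig s σ (fun i => n * x i - k i) with hΨ
    have hΨ0 : ∀ k, 0 ≤ Ψ k := fun k => PsiSig_nonneg hσ _
    have hm : ∀ k ∈ Jfin s a b n, 0 ≤ kantMean s n f k ∧ kantMean s n f k ≤ M := by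
      intro k hk
      constructor
      · exact kantMean_nonneg hn hk hf0
      · have := kantMean_sub_le hn hfc hk hM0 (c := 0) (ε := M)
          (fun u hu => by simpa using hM u (cell_subset hn hk hu))
        rw [sub_zero] at this
        exact (abs_le.1 this).2
    rw [maxProd_eq_sup' h, maxProd_eq_sup' h]
    set Den := (Jfin s a b n).sup' h Ψ with hDen
    set Num := (Jfin s a b n).sup' h (fun k => kantMean s n f k * Ψ k) with hNum
    have hDen0 : 0 ≤ Den := by
      rcases h with ⟨k, hk⟩
      exact le_trans (hΨ0 k) (Finset.le_sup' _ hk)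
    have hNum0 : 0 ≤ Num := by
      rcases h with ⟨k, hk⟩
      exact le_trans (mul_nonneg (hm k hk).1 (hΨ0 k))
        (Finset.le_sup' (fun k => kantMean s n f k * Ψ k) hk)
    have hNumle : Num ≤ M * Den := by
      apply Finset.sup'_le
      intro k hk
      calc kantMean s n f k * Ψ k ≤ M * Ψ k :=
            mul_le_mul_of_nonneg_right (hm k hk).2 (hΨ0 k)
        _ ≤ M * Den := mul_le_mul_of_nonneg_left (Finset.le_sup' _ hk) hM0
    rcases eq_or_lt_of_le hDen0 with hD | hD
    · have : Num = 0 := le_antisymm (by rw [← hD] at hNumle; linarith) hNum0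
      rw [this, ← hD]
      simp [hM0]
    · exact ⟨div_nonneg hNum0 hDen0, (div_le_iff₀ hD).2 (by linarith [hNumle])⟩

end KopLemmas
set_option maxHeartbeats 2000000 in
lemma Kop_tendsto_pointwise {σ : ℝ → ℝ} {s : ℕ} (hs : 1 ≤ s) {a b : Fin s → ℝ}
    (hmono : Monotone σ) (hbot : Tendsto σ atBot (nhds 0))
    (htop : Tendsto σ atTop (nhds 1))
    (hSigma1 : ∀ x : ℝ, σ (-x) - 1/2 = -(σ x - 1/2))
    (hSigma2b : ∀ x y : ℝ, 0 ≤ x → x ≤ y → phiSig σ y ≤ phiSig σ x)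
    {f : (Fin s → ℝ) → ℝ} (hf0 : ∀ y ∈ Set.Icc a b, 0 ≤ f y)
    (hfc : ContinuousOn f (Set.Icc a b))
    {M : ℝ} (hM0 : 0 ≤ M) (hM : ∀ y ∈ Set.Icc a b, |f y| ≤ M)
    {x : Fin s → ℝ} (hx : ∀ i, x i ∈ Set.Ioo (a i) (b i)) :
    Tendsto (fun n : ℕ => Kop s σ a b n f x) atTop (nhds (f x)) := by
  have hσ0 : ∀ t, 0 ≤ phiSig σ t := phiSig_nonneg hmono
  have hle0 : ∀ t, phiSig σ t ≤ phiSig σ 0 := phiSig_le_zero' hSigma1 hSigma2b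
  set c1 := phiSig σ 1 with hc1def
  set C0 := phiSig σ 0 with hC0def
  have hc1 : 0 < c1 := phiSig_one_pos hmono htop hSigma1 hSigma2b
  have hC0 : c1 ≤ C0 := hSigma2b 0 1 le_rfl zero_le_one
  have hC0pos : 0 < C0 := lt_of_lt_of_le hc1 hC0
  have hxIcc : x ∈ Set.Icc a b := by
    rw [Set.mem_Icc]
    exact ⟨fun i => (hx i).1.le, fun i => (hx i).2.le⟩
  have key : ∀ ε > (0:ℝ), ∀ᶠ n : ℕ in atTop,
      |Kop s σ a b n f x - f x| ≤ ε * (C0 ^ s / c1 ^ s) := by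
    intro ε hε
    have hcw : ContinuousWithinAt f (Set.Icc a b) x := hfc x hxIcc
    rw [Metric.continuousWithinAt_iff] at hcw
    obtain ⟨δ, hδ, hδf⟩ := hcw ε hε
    have hdenpos : (0:ℝ) < 2 * M * C0 ^ (s-1) + 1 := by
      have := mul_nonneg (mul_nonneg (by norm_num : (0:ℝ) ≤ 2) hM0)
        (pow_nonneg hC0pos.le (s-1))
      linarith
    set B := ε * c1 ^ s / (2 * M * C0 ^ (s-1) + 1) with hBdef
    have hB0 : 0 < B := div_pos (by positivity) hdenpos
    have hev1 : ∀ᶠ n : ℕ in atTop, ∀ i, 1 ≤ (n:ℝ) * (x i - a i) := by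
      rw [eventually_all]
      intro i
      exact ((tendsto_natCast_atTop_atTop).atTop_mul_const
        (sub_pos.2 (hx i).1)).eventually_ge_atTop 1
    have hev2 : ∀ᶠ n : ℕ in atTop, ∀ i, 1 ≤ (n:ℝ) * (b i - x i) := by
      rw [eventually_all]
      intro i
      exact ((tendsto_natCast_atTop_atTop).atTop_mul_const
        (sub_pos.2 (hx i).2)).eventually_ge_atTop 1
    have hev3 : ∀ᶠ n : ℕ in atTop, 2 / δ < (n:ℝ) :=
      tendsto_natCast_atTop_atTop.eventually_gt_atTop _
    have hev4 : ∀ᶠ n : ℕ in atTop, phiSig σ ((n:ℝ) * (δ/2)) < B := by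
      have hT : Tendsto (fun n : ℕ => phiSig σ ((n:ℝ) * (δ/2))) atTop (nhds 0) :=
        (phiSig_tendsto hbot htop).comp
          ((tendsto_natCast_atTop_atTop).atTop_mul_const (by positivity))
      exact hT.eventually (gt_mem_nhds hB0)
    have hev5 : ∀ᶠ n : ℕ in atTop, (1:ℝ) ≤ (n:ℝ) :=
      tendsto_natCast_atTop_atTop.eventually_ge_atTop 1
    filter_upwards [hev1, hev2, hev3, hev4, hev5] with n h1 h2 h3 h4 h5
    have hn : (0:ℝ) < n := lt_of_lt_of_le one_pos h5
    -- the center index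
    set k0 : Fin s → ℤ := fun i => ⌊(n:ℝ) * x i⌋ with hk0def
    have hk0 : k0 ∈ Jfin s a b n := by
      rw [mem_Jfin]
      intro i
      constructor
      · rw [Int.ceil_le]
        have hfl : (n:ℝ) * x i - 1 < ((⌊(n:ℝ) * x i⌋ : ℤ) : ℝ) := Int.sub_one_lt_floor _
        have h1i := h1 i
        show (n:ℝ) * a i ≤ ((k0 i : ℤ) : ℝ)
        rw [hk0def]
        nlinarith
      · have hcast : ((k0 i + 1 : ℤ) : ℝ) ≤ (n:ℝ) * b i := by
          have hfl : ((⌊(n:ℝ) * x i⌋ : ℤ) : ℝ) ≤ (n:ℝ) * x i := Int.floor_le _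
          have h2i := h2 i
          push_cast [hk0def]
          nlinarith
        have := Int.le_floor.2 hcast
        omega
    have hne : (Jfin s a b n).Nonempty := ⟨k0, hk0⟩
    have hKopEq : Kop s σ a b n f x =
        ((Jfin s a b n).sup' hne
          (fun k => kantMean s n f k * PsiSig s σ (fun i => n * x i - k i))) /
        ((Jfin s a b n).sup' hne (fun k => PsiSig s σ (fun i => n * x i - k i))) := by
      unfold Kop
      rw [maxProd_eq_sup' hne, maxProd_eq_sup' hne]
    set Ψ : (Fin s → ℤ) → ℝ := fun k => PsiSig s σ (fun i => n * x i - k i) with hΨdef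
    set m : (Fin s → ℤ) → ℝ := fun k => kantMean s n f k with hmdef
    have hΨ0 : ∀ k, 0 ≤ Ψ k := fun k => PsiSig_nonneg hσ0 _
    have hΨle : ∀ k, Ψ k ≤ C0 ^ s := fun k => PsiSig_le hσ0 hle0 _
    set Den := (Jfin s a b n).sup' hne Ψ with hDendef
    set Num := (Jfin s a b n).sup' hne (fun k => m k * Ψ k) with hNumdef
    have hDen_ge : c1 ^ s ≤ Den := by
      refine le_trans ?_ (Finset.le_sup' Ψ hk0)
      apply PsiSig_ge hσ0
      · intro t ht
        rw [phiSig_abs hSigma1 t]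
        exact hSigma2b |t| 1 (abs_nonneg t) ht
      · intro i
        have hfl1 : ((⌊(n:ℝ) * x i⌋ : ℤ) : ℝ) ≤ (n:ℝ) * x i := Int.floor_le _
        have hfl2 : (n:ℝ) * x i < ((⌊(n:ℝ) * x i⌋ : ℤ) : ℝ) + 1 := Int.lt_floor_add_one _
        rw [hk0def, abs_le]
        constructor <;> [nlinarith; nlinarith]
    have hDenpos : 0 < Den := lt_of_lt_of_le (by positivity) hDen_ge
    have hmbd : ∀ k ∈ Jfin s a b n, |m k - f x| ≤ 2 * M := by
      intro k hk
      have hmk := kantMean_sub_le hn hfc hk hM0 (c := 0)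
        (fun u hu => by simpa using hM u (cell_subset hn hk hu))
      rw [sub_zero] at hmk
      have hfx := hM x hxIcc
      rw [abs_le] at hmk hfx ⊢
      constructor <;> [linarith; linarith]
    have hS : ∀ k ∈ Jfin s a b n, |m k - f x| * Ψ k ≤ ε * C0 ^ s := by
      intro k hk
      by_cases hnear : ∀ i, |(n:ℝ) * x i - (k i : ℝ)| ≤ (n:ℝ) * (δ/2)
      · have hmk : |m k - f x| ≤ ε := by
          apply kantMean_sub_le hn hfc hk hε.le
          intro u hu
          rw [Set.mem_Icc] at hu
          have hudist : dist u x < δ := by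
            rw [dist_pi_lt_iff hδ]
            intro i
            have hu1 : (k i : ℝ) ≤ u i * n := (div_le_iff₀ hn).1 (hu.1 i)
            have hu2 : u i * n ≤ (k i : ℝ) + 1 := (le_div_iff₀ hn).1 (hu.2 i)
            have hki := abs_le.1 (hnear i)
            have h3' : 2 < δ * n := by
              rw [div_lt_iff₀ hδ] at h3
              linarith
            rw [Real.dist_eq, abs_lt]
            constructor <;> nlinarith [hki.1, hki.2]
          have := hδf (cell_subset hn hk (Set.mem_Icc.2 hu)) hudist
          rw [Real.dist_eq] at this
          exact this.le
        exact mul_le_mul hmk (hΨle k) (hΨ0 k) hε.le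
      · push_neg at hnear
        obtain ⟨i0, hi0⟩ := hnear
        have hΨk : Ψ k ≤ phiSig σ ((n:ℝ) * (δ/2)) * C0 ^ (s-1) := by
          apply PsiSig_factor_le hσ0 hle0 _ i0
          rw [phiSig_abs hSigma1]
          exact hSigma2b ((n:ℝ) * (δ/2)) _ (by positivity) hi0.le
        have hφ0 := hσ0 ((n:ℝ) * (δ/2))
        have hB : (2 * M * C0 ^ (s-1) + 1) * B = ε * c1 ^ s := by
          rw [hBdef, mul_comm, div_mul_cancel₀ _ (ne_of_gt hdenpos)]
        have hc1C0 : c1 ^ s ≤ C0 ^ s := pow_le_pow_left₀ hc1.le hC0 s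
        calc |m k - f x| * Ψ k
            ≤ (2 * M) * (phiSig σ ((n:ℝ) * (δ/2)) * C0 ^ (s-1)) :=
              mul_le_mul (hmbd k hk) hΨk (hΨ0 k) (by linarith)
          _ = (2 * M * C0 ^ (s-1)) * phiSig σ ((n:ℝ) * (δ/2)) := by ring
          _ ≤ (2 * M * C0 ^ (s-1) + 1) * phiSig σ ((n:ℝ) * (δ/2)) := by linarith
          _ ≤ (2 * M * C0 ^ (s-1) + 1) * B :=
              mul_le_mul_of_nonneg_left h4.le hdenpos.le
          _ = ε * c1 ^ s := hB
          _ ≤ ε * C0 ^ s := mul_le_mul_of_nonneg_left hc1C0 hε.le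
    have hNumUp : Num ≤ f x * Den + ε * C0 ^ s := by
      apply Finset.sup'_le
      intro k hk
      have e1 : m k ≤ f x + |m k - f x| := by
        have := le_abs_self (m k - f x); linarith
      have e2 : m k * Ψ k ≤ (f x + |m k - f x|) * Ψ k :=
        mul_le_mul_of_nonneg_right e1 (hΨ0 k)
      have e3 : f x * Ψ k ≤ f x * Den :=
        mul_le_mul_of_nonneg_left (Finset.le_sup' Ψ hk) (hf0 x hxIcc)
      have e4 := hS k hk
      nlinarith [hΨ0 k]
    have hNumLo : f x * Den - ε * C0 ^ s ≤ Num := by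
      obtain ⟨ks, hks, hkeq⟩ := Finset.exists_mem_eq_sup' hne Ψ
      have e1 : f x - |m ks - f x| ≤ m ks := by
        have := neg_abs_le (m ks - f x); linarith
      have e2 : (f x - |m ks - f x|) * Ψ ks ≤ m ks * Ψ ks :=
        mul_le_mul_of_nonneg_right e1 (hΨ0 ks)
      have e3 : m ks * Ψ ks ≤ Num := Finset.le_sup' (fun k => m k * Ψ k) hks
      have e4 := hS ks hks
      rw [hDendef, hkeq]
      nlinarith
    have habs : |Num - f x * Den| ≤ ε * C0 ^ s :=
      abs_le.2 ⟨by linarith, by linarith⟩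
    rw [hKopEq]
    have hdiv : Num / Den - f x = (Num - f x * Den) / Den := by
      field_simp
    rw [hdiv, abs_div, abs_of_pos hDenpos]
    calc |Num - f x * Den| / Den ≤ (ε * C0 ^ s) / c1 ^ s :=
          div_le_div₀ (by positivity) habs (by positivity) hDen_ge
      _ = ε * (C0 ^ s / c1 ^ s) := by ring
  -- from `key` to the limit
  rw [Metric.tendsto_atTop]
  intro ε' hε'
  have hc1s : (0:ℝ) < c1 ^ s := by positivity
  have hC0s : (0:ℝ) < C0 ^ s := by positivity
  obtain ⟨N, hN⟩ := (eventually_atTop.1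
    (key (ε'/2 * (c1 ^ s / C0 ^ s)) (by positivity)))
  refine ⟨N, fun n hn => ?_⟩
  have h := hN n hn
  rw [Real.dist_eq]
  calc |Kop s σ a b n f x - f x|
      ≤ (ε'/2 * (c1 ^ s / C0 ^ s)) * (C0 ^ s / c1 ^ s) := h
    _ = ε'/2 * ((c1 ^ s / C0 ^ s) * (C0 ^ s / c1 ^ s)) := by ring
    _ = ε'/2 := by
        rw [div_mul_div_comm, mul_comm (c1 ^ s),
          div_self (by positivity : (C0 ^ s * c1 ^ s) ≠ 0), mul_one]
    _ < ε' := by linarith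
lemma slice_null {s : ℕ} (a b : Fin s → ℝ) (i : Fin s) (c : ℝ) :
    volume {x : Fin s → ℝ | x ∈ Set.Icc a b ∧ x i = c} = 0 := by
  have hT : volume (Set.pi Set.univ
      fun j => if j = i then ({c} : Set ℝ) else Set.Icc (a j) (b j)) = 0 := by
    rw [volume_pi_pi]
    apply Finset.prod_eq_zero (Finset.mem_univ i)
    simp
  refine measure_mono_null ?_ hT
  rintro x ⟨hxI, hxi⟩
  rw [Set.mem_pi]
  intro j _
  by_cases h : j = i
  · subst h; simp [hxi]
  · simp only [if_neg h, Set.mem_Icc]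
    exact ⟨hxI.1 j, hxI.2 j⟩

lemma boundary_null {s : ℕ} (a b : Fin s → ℝ) :
    volume (Set.Icc a b \ Set.pi Set.univ fun i => Set.Ioo (a i) (b i)) = 0 := by
  have hsub : Set.Icc a b \ Set.pi Set.univ (fun i => Set.Ioo (a i) (b i)) ⊆
      ⋃ i : Fin s, ({x : Fin s → ℝ | x ∈ Set.Icc a b ∧ x i = a i} ∪
        {x : Fin s → ℝ | x ∈ Set.Icc a b ∧ x i = b i}) := by
    rintro x ⟨hxI, hxn⟩
    have hxn' : ∃ i, x i ∉ Set.Ioo (a i) (b i) := by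
      by_contra h
      push_neg at h
      exact hxn (fun i _ => h i)
    obtain ⟨i, hi⟩ := hxn'
    have h1 : a i ≤ x i := hxI.1 i
    have h2 : x i ≤ b i := hxI.2 i
    rw [Set.mem_Ioo] at hi
    push_neg at hi
    refine Set.mem_iUnion.2 ⟨i, ?_⟩
    rcases lt_or_eq_of_le h1 with h | h
    · right; exact ⟨hxI, le_antisymm h2 (hi h)⟩
    · left; exact ⟨hxI, h.symm⟩
  exact measure_mono_null hsub (measure_iUnion_null fun i =>
    measure_union_null (slice_null a b i (a i)) (slice_null a b i (b i)))

theorem stmt11 (σ : ℝ → ℝ) (s : ℕ) (hs : 1 ≤ s) (a b : Fin s → ℝ)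
    (hab : ∀ i, a i < b i)
    (hmeas : Measurable σ) (hmono : Monotone σ)
    (hbot : Tendsto σ atBot (nhds 0)) (htop : Tendsto σ atTop (nhds 1))
    (hSigma1 : ∀ x : ℝ, σ (-x) - 1/2 = -(σ x - 1/2))
    (hSigma2a : ∀ x y : ℝ, x ≤ y → y < 0 → phiSig σ x ≤ phiSig σ y)
    (hSigma2b : ∀ x y : ℝ, 0 ≤ x → x ≤ y → phiSig σ y ≤ phiSig σ x)
    (hSigma3 : ∃ α : ℝ, 0 < α ∧ σ =O[atBot] fun x => |x| ^ (-α))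
    (φ : ℝ → ℝ)
    (hphi0 : φ 0 = 0) (hphipos : ∀ u : ℝ, 0 < u → 0 < φ u)
    (hphicont : ContinuousOn φ (Set.Ici 0)) (hphimono : MonotoneOn φ (Set.Ici 0))
    (hphitop : Tendsto φ atTop atTop)
    (hphiconv : ConvexOn ℝ (Set.Ici 0) φ)
    (f : (Fin s → ℝ) → ℝ)
    (hf0 : ∀ x ∈ Set.Icc a b, 0 ≤ f x)
    (hfc : ContinuousOn f (Set.Icc a b)) :
    ∀ lam : ℝ, 0 < lam →
      Tendsto (fun n : ℕ =>
          modular s a b φ (fun x => lam * (Kop s σ a b n f x - f x)))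
        atTop (nhds 0) := by
  intro lam hlam
  obtain ⟨M, hM⟩ := isCompact_Icc.exists_bound_of_continuousOn hfc
  have haIcc : a ∈ Set.Icc a b := ⟨le_rfl, fun i => (hab i).le⟩
  have hM0 : 0 ≤ M := le_trans (norm_nonneg _) (hM a haIcc)
  have hM' : ∀ y ∈ Set.Icc a b, |f y| ≤ M := fun y hy => by
    simpa [Real.norm_eq_abs] using hM y hy
  have hσ0 : ∀ t, 0 ≤ phiSig σ t := phiSig_nonneg hmono
  have hG : Continuous (fun t : ℝ => φ |t|) := by
    rw [← continuousOn_univ]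
    exact hphicont.comp continuous_abs.continuousOn (fun t _ => abs_nonneg t)
  have hKb : ∀ (n : ℕ) (x : Fin s → ℝ),
      0 ≤ Kop s σ a b n f x ∧ Kop s σ a b n f x ≤ M :=
    fun n x => Kop_nonneg_le hs hσ0 hf0 hfc hM0 hM' x
  have hbdd : ∀ (n : ℕ), ∀ x ∈ Set.Icc a b,
      |lam * (Kop s σ a b n f x - f x)| ≤ lam * M := by
    intro n x hx
    rw [abs_mul, abs_of_pos hlam]
    apply mul_le_mul_of_nonneg_left _ hlam.le
    have h1 := (hKb n x).1
    have h2 := (hKb n x).2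
    have h3 := hf0 x hx
    have h4 := (abs_le.1 (hM' x hx)).2
    rw [abs_le]
    constructor <;> linarith
  have hlamM : (0:ℝ) ≤ lam * M := mul_nonneg hlam.le hM0
  set μ := volume.restrict (Set.Icc a b) with hμdef
  have hmeas' : ∀ n : ℕ, AEMeasurable
      (fun x => ENNReal.ofReal (φ |lam * (Kop s σ a b n f x - f x)|)) μ := by
    intro n
    have hKm : Measurable (Kop s σ a b n f) := measurable_Kop hmeas f
    have hfm : AEMeasurable f μ := hfc.aemeasurable measurableSet_Icc
    have hin : AEMeasurable (fun x => lam * (Kop s σ a b n f x - f x)) μ :=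
      (hKm.aemeasurable.sub hfm).const_mul lam
    exact (ENNReal.measurable_ofReal.comp hG.measurable).comp_aemeasurable hin
  have hbd' : ∀ n : ℕ,
      (fun x => ENNReal.ofReal (φ |lam * (Kop s σ a b n f x - f x)|)) ≤ᵐ[μ]
        fun _ => ENNReal.ofReal (φ (lam * M)) := by
    intro n
    rw [hμdef, Filter.EventuallyLE, ae_restrict_iff' measurableSet_Icc]
    apply Eventually.of_forall
    intro x hx
    apply ENNReal.ofReal_le_ofReal
    exact hphimono (Set.mem_Ici.2 (abs_nonneg _)) (Set.mem_Ici.2 hlamM) (hbdd n x hx)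
  have hfin' : ∫⁻ _x, (fun _ => ENNReal.ofReal (φ (lam * M))) _x ∂μ ≠ ⊤ := by
    rw [lintegral_const, hμdef, Measure.restrict_apply_univ]
    exact ENNReal.mul_ne_top ENNReal.ofReal_ne_top isCompact_Icc.measure_lt_top.ne
  have hlim' : ∀ᵐ x ∂μ, Tendsto
      (fun n : ℕ => ENNReal.ofReal (φ |lam * (Kop s σ a b n f x - f x)|)) atTop
      (nhds ((fun _ => (0:ℝ≥0∞)) x)) := by
    have h1 : ∀ᵐ x ∂μ, x ∈ Set.Icc a b := ae_restrict_mem measurableSet_Icc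
    have hD : μ (Set.Icc a b \ Set.pi Set.univ fun i => Set.Ioo (a i) (b i)) = 0 :=
      le_antisymm (le_trans (Measure.restrict_le_self _) (boundary_null a b).le) zero_le
    have h2 : ∀ᵐ x ∂μ,
        x ∉ Set.Icc a b \ Set.pi Set.univ fun i => Set.Ioo (a i) (b i) :=
      measure_eq_zero_iff_ae_notMem.1 hD
    filter_upwards [h1, h2] with x hx1 hx2
    have hxint : ∀ i, x i ∈ Set.Ioo (a i) (b i) := by
      by_contra h
      push_neg at h
      exact hx2 ⟨hx1, fun hpi => by
        obtain ⟨i, hi⟩ := h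
        exact hi (hpi i (Set.mem_univ i))⟩
    have hKt : Tendsto (fun n : ℕ => Kop s σ a b n f x) atTop (nhds (f x)) :=
      Kop_tendsto_pointwise hs hmono hbot htop hSigma1 hSigma2b hf0 hfc hM0 hM' hxint
    have ht0 : Tendsto (fun n : ℕ => lam * (Kop s σ a b n f x - f x)) atTop
        (nhds 0) := by
      have := (hKt.sub (tendsto_const_nhds (x := f x))).const_mul lam
      simpa using this
    have ht1 : Tendsto (fun n : ℕ => φ |lam * (Kop s σ a b n f x - f x)|) atTop
        (nhds (φ |(0:ℝ)|)) := (hG.tendsto 0).comp ht0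
    have ht2 := (ENNReal.continuous_ofReal.tendsto _).comp ht1
    simpa [hphi0, Function.comp_def] using ht2
  have hmain := tendsto_lintegral_of_dominated_convergence'
    (μ := μ)
    (F := fun (n : ℕ) x => ENNReal.ofReal (φ |lam * (Kop s σ a b n f x - f x)|))
    (f := fun _ => (0:ℝ≥0∞))
    (fun _ => ENNReal.ofReal (φ (lam * M))) hmeas' hbd' hfin' hlim'
  simpa [modular, hμdef] using hmain
end
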